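/- arXiv:math/9802046 — 5 statements merged into one kernel-verified Lean document; each statement's English description precedes it below -/
import Mathlib

section
/- For all positive integers m and n, φ(m·n) ≤ φ(m) + φ(n). -/
/-- Number of digits of `n` in base `B`. -/
def dig (B n : ℕ) : ℕ := (Nat.digits B n).length

/-- Number of digits needed to write the prime power factorisation of `n` in base `B`. -/
def phi (B n : ℕ) : ℕ :=
  ∑ p ∈ n.factorization.support,
    (dig B p + if n.factorization p = 1 then 0 else dig B (n.factorization p))

/-- `h B n = δ(n) - φ(n)` as an integer. -/
def hEcon (B n : ℕ) : ℤ := (dig B n : ℤ) - (phi B n : ℤ)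

/-!
The cost `φ` is a sum over primes of a local cost depending only on `p` and the exponent of `p`,
and exponents add under multiplication. So it suffices that the local cost is subadditive in the
exponent. The only nontrivial case is a prime dividing both factors, where one pays `δ(p)` twice on
the right; this pays for the extra digit of `a + b`, because `a + b ≤ 2 B^δ'(a) B^δ'(b)` and
`δ(2) ≤ δ(p)`.
-/

theorem Finsupp.sum_add_le {α M N : Type*} [DecidableEq α] [AddCommMonoid M] [AddCommMonoid N]
    [PartialOrder N] [IsOrderedAddMonoid N] (f g : α →₀ M) (h : α → M → N)
    (h_zero : ∀ a, h a 0 = 0)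
    (h_add : ∀ a ∈ f.support ∪ g.support, ∀ x y, h a (x + y) ≤ h a x + h a y) :
    (f + g).sum h ≤ f.sum h + g.sum h := by
  rw [(f + g).sum_of_support_subset Finsupp.support_add h (fun a _ => h_zero a),
    f.sum_of_support_subset Finset.subset_union_left h (fun a _ => h_zero a),
    g.sum_of_support_subset Finset.subset_union_right h (fun a _ => h_zero a),
    ← Finset.sum_add_distrib]
  exact Finset.sum_le_sum fun a ha => h_add a ha (f a) (g a)

section Digits

variable {B : ℕ}

theorem dig_le_of_lt_pow (hB : 2 ≤ B) {x k : ℕ} (h : x < B ^ k) : dig B x ≤ k :=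
  (Nat.digits_length_le_iff hB x).mpr h

theorem dig_mono {a b : ℕ} (h : a ≤ b) : dig B a ≤ dig B b :=
  Nat.le_length_digits_le B a b h

theorem lt_pow_dig (hB : 2 ≤ B) (x : ℕ) : x < B ^ dig B x :=
  Nat.lt_base_pow_length_digits hB

def dig' (B a : ℕ) : ℕ := if a = 1 then 0 else dig B a

theorem dig'_le_dig (a : ℕ) : dig' B a ≤ dig B a := by
  unfold dig'
  split_ifs <;> omega

theorem le_pow_dig' (hB : 2 ≤ B) (a : ℕ) : a ≤ B ^ dig' B a := by
  unfold dig'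
  split_ifs with ha
  · simp [ha]
  · exact (lt_pow_dig hB a).le

theorem dig'_add_le (hB : 2 ≤ B) (a b : ℕ) : dig' B (a + b) ≤ dig B 2 + dig' B a + dig' B b := by
  have hX := le_pow_dig' hB a
  have hY := le_pow_dig' hB b
  have hX1 : 1 ≤ B ^ dig' B a := Nat.one_le_pow _ _ (by omega)
  have hY1 : 1 ≤ B ^ dig' B b := Nat.one_le_pow _ _ (by omega)
  have h2 := lt_pow_dig hB 2
  have hlt : a + b < B ^ (dig B 2 + dig' B a + dig' B b) := by
    rw [pow_add, pow_add]
    calc a + b ≤ 2 * (B ^ dig' B a * B ^ dig' B b) := by nlinarith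
      _ < B ^ dig B 2 * (B ^ dig' B a * B ^ dig' B b) :=
          Nat.mul_lt_mul_of_pos_right h2 (Nat.mul_pos hX1 hY1)
      _ = _ := by ring
  exact (dig'_le_dig _).trans (dig_le_of_lt_pow hB hlt)

def phiLocal (B p a : ℕ) : ℕ := if a = 0 then 0 else dig B p + dig' B a

theorem phiLocal_add_le (hB : 2 ≤ B) {p : ℕ} (hp : 2 ≤ p) (a b : ℕ) :
    phiLocal B p (a + b) ≤ phiLocal B p a + phiLocal B p b := by
  rcases Nat.eq_zero_or_pos a with rfl | ha
  · simp [phiLocal]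
  rcases Nat.eq_zero_or_pos b with rfl | hb
  · simp [phiLocal]
  simp only [phiLocal, if_neg ha.ne', if_neg hb.ne', if_neg (by omega : a + b ≠ 0)]
  have := dig'_add_le hB a b
  have := dig_mono (B := B) hp
  omega

theorem phi_eq_sum_phiLocal (B n : ℕ) : phi B n = n.factorization.sum (phiLocal B) :=
  Finset.sum_congr rfl fun _ hp => by
    rw [phiLocal, if_neg (Finsupp.mem_support_iff.mp hp)]
    rfl

end Digits

theorem statement_5 (B : ℕ) (hB : 2 ≤ B) (m n : ℕ) (hm : 0 < m) (hn : 0 < n) :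
    phi B (m * n) ≤ phi B m + phi B n := by
  simp only [phi_eq_sum_phiLocal, Nat.factorization_mul hm.ne' hn.ne']
  refine Finsupp.sum_add_le _ _ _ (fun _ => if_pos rfl) fun p hp => phiLocal_add_le hB ?_
  rw [Finset.mem_union, Nat.support_factorization, Nat.support_factorization] at hp
  exact hp.elim (fun h => (Nat.prime_of_mem_primeFactors h).two_le)
    (fun h => (Nat.prime_of_mem_primeFactors h).two_le)
end

section
/- For every positive integer n and every positive integer b, φ(n^b) ≤ φ(n) + δ(b)·log₂(n), where the inequality is between real numbers and log₂ is the real base-2 logarithm. -/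
/-!
Raising `n = ∏ pᵢ ^ aᵢ` to the power `b` keeps the primes and multiplies each exponent by `b`.
Since the number of digits is subadditive under multiplication, each of the `ω(n)` exponents
costs at most `δ(b)` extra digits, and `2 ^ ω(n) ≤ n` gives `ω(n) ≤ log₂ n`.
-/

/-- The paper's `δ'`: an exponent `1` is not written. -/
def digExp (B a : ℕ) : ℕ := if a = 1 then 0 else dig B a

lemma phi_eq_sum_digExp (B n : ℕ) :
    phi B n = ∑ p ∈ n.primeFactors, (dig B p + digExp B (n.factorization p)) := rfl

lemma dig_mul_le {B : ℕ} (hB : 2 ≤ B) (x y : ℕ) : dig B (x * y) ≤ dig B x + dig B y := by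
  refine (Nat.digits_length_le_iff hB _).2 ?_
  rw [pow_add]
  exact Nat.mul_lt_mul'' (Nat.lt_base_pow_length_digits hB) (Nat.lt_base_pow_length_digits hB)

lemma digExp_le_dig (B a : ℕ) : digExp B a ≤ dig B a := by
  unfold digExp
  split_ifs <;> simp

lemma digExp_mul_le {B : ℕ} (hB : 2 ≤ B) (b a : ℕ) :
    digExp B (b * a) ≤ digExp B a + dig B b := by
  by_cases ha : a = 1
  · rw [ha, mul_one, show digExp B 1 = 0 from if_pos rfl, zero_add]
    exact digExp_le_dig B b
  · have hba : b * a ≠ 1 := fun h => ha (Nat.eq_one_of_mul_eq_one_left h)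
    simp only [digExp, if_neg ha, if_neg hba]
    linarith [dig_mul_le hB b a]

lemma phi_pow_le {B : ℕ} (hB : 2 ≤ B) (n b : ℕ) :
    phi B (n ^ b) ≤ phi B n + n.primeFactors.card * dig B b := by
  rw [phi_eq_sum_digExp, phi_eq_sum_digExp, ← smul_eq_mul, ← Finset.sum_const,
    ← Finset.sum_add_distrib]
  calc ∑ p ∈ (n ^ b).primeFactors, (dig B p + digExp B ((n ^ b).factorization p))
      ≤ ∑ p ∈ n.primeFactors, (dig B p + digExp B ((n ^ b).factorization p)) :=
        Finset.sum_le_sum_of_subset <| by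
          simpa only [← Nat.support_factorization, Nat.factorization_pow] using Finsupp.support_smul
    _ ≤ ∑ p ∈ n.primeFactors, (dig B p + digExp B (n.factorization p) + dig B b) := by
        refine Finset.sum_le_sum fun p _ => ?_
        rw [Nat.factorization_pow, Finsupp.smul_apply, smul_eq_mul]
        linarith [digExp_mul_le hB b (n.factorization p)]

lemma two_pow_card_primeFactors_le {n : ℕ} (hn : n ≠ 0) : 2 ^ n.primeFactors.card ≤ n :=
  calc 2 ^ n.primeFactors.card ≤ ∏ p ∈ n.primeFactors, p :=
        Finset.pow_card_le_prod _ _ _ fun _ hp => (Nat.prime_of_mem_primeFactors hp).two_le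
    _ ≤ n := Nat.le_of_dvd (Nat.pos_of_ne_zero hn) (Nat.prod_primeFactors_dvd n)

lemma card_primeFactors_le_logb (n : ℕ) : (n.primeFactors.card : ℝ) ≤ Real.logb 2 n := by
  rcases eq_or_ne n 0 with rfl | hn
  · simp
  rw [Real.le_logb_iff_rpow_le one_lt_two (by positivity), Real.rpow_natCast]
  exact_mod_cast two_pow_card_primeFactors_le hn

theorem statement_6_general (B : ℕ) (hB : 2 ≤ B) (n b : ℕ) :
    (phi B (n ^ b) : ℝ) ≤ (phi B n : ℝ) + (dig B b : ℝ) * Real.logb 2 n := by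
  calc (phi B (n ^ b) : ℝ) ≤ phi B n + n.primeFactors.card * dig B b := by
        exact_mod_cast phi_pow_le hB n b
    _ ≤ phi B n + dig B b * Real.logb 2 n := by
        rw [mul_comm]
        gcongr
        exact card_primeFactors_le_logb n

theorem statement_6 (B : ℕ) (hB : 2 ≤ B) (n b : ℕ) (hn : 0 < n) (hb : 0 < b) :
    (phi B (n ^ b) : ℝ) ≤ (phi B n : ℝ) + (dig B b : ℝ) * Real.logb 2 n :=
  statement_6_general B hB n b
end

section
/- If m is a frugal positive integer (h(m) > 0), then for every positive integer n, h(m·n) ≥ h(n). -/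
namespace Economical

variable {B : ℕ}

lemma dig_mono (B : ℕ) {x y : ℕ} (h : x ≤ y) : dig B x ≤ dig B y :=
  Nat.le_length_digits_le B x y h

lemma dig_le_iff (hB : 2 ≤ B) {n k : ℕ} : dig B n ≤ k ↔ n < B ^ k :=
  Nat.digits_length_le_iff hB n

lemma lt_dig_iff (hB : 2 ≤ B) {n k : ℕ} : k < dig B n ↔ B ^ k ≤ n :=
  Nat.lt_digits_length_iff hB n

lemma dig_one (hB : 2 ≤ B) : dig B 1 = 1 := by
  simp [dig, Nat.digits_of_lt B 1 one_ne_zero hB]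

lemma dig_pos (hB : 2 ≤ B) {n : ℕ} (hn : n ≠ 0) : 0 < dig B n :=
  (lt_dig_iff hB).2 (by simpa using Nat.one_le_iff_ne_zero.2 hn)

lemma dig_add_le (hB : 2 ≤ B) (x y : ℕ) : dig B (x + y) ≤ dig B x + dig B y := by
  rcases eq_or_ne x 0 with rfl | hx
  · simp
  rcases eq_or_ne y 0 with rfl | hy
  · simp
  have hBx : 2 ≤ B ^ dig B x := hB.trans (Nat.le_self_pow (dig_pos hB hx).ne' B)
  have hBy : 2 ≤ B ^ dig B y := hB.trans (Nat.le_self_pow (dig_pos hB hy).ne' B)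
  rw [dig_le_iff hB, pow_add]
  calc x + y < B ^ dig B x + B ^ dig B y :=
        Nat.add_lt_add ((dig_le_iff hB).1 le_rfl) ((dig_le_iff hB).1 le_rfl)
    _ ≤ B ^ dig B x * B ^ dig B y := by nlinarith

lemma dig_add_dig_le_dig_mul_add_one (hB : 2 ≤ B) {x y : ℕ} (hx : x ≠ 0) (hy : y ≠ 0) :
    dig B x + dig B y ≤ dig B (x * y) + 1 := by
  have hx₀ := dig_pos hB hx
  have hy₀ := dig_pos hB hy
  have hxy : dig B x - 1 + (dig B y - 1) < dig B (x * y) := by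
    rw [lt_dig_iff hB, pow_add]
    exact Nat.mul_le_mul ((lt_dig_iff hB).1 (by omega)) ((lt_dig_iff hB).1 (by omega))
  omega

/-- The paper's `δ'`. -/
def dig' (B k : ℕ) : ℕ := if k = 1 then 0 else dig B k

/-- The share of `p ^ k` in `φ`. It vanishes for `k = 0`, so `φ` may be summed over any
superset of the prime factors. -/
def phiTerm (B p k : ℕ) : ℕ := if k = 0 then 0 else dig B p + dig' B k

lemma phi_eq_sum_phiTerm {n : ℕ} {S : Finset ℕ} (hS : n.factorization.support ⊆ S) :
    phi B n = ∑ p ∈ S, phiTerm B p (n.factorization p) := by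
  rw [phi, ← Finset.sum_subset hS]
  · exact Finset.sum_congr rfl fun p hp => by
      rw [phiTerm, if_neg (Finsupp.mem_support_iff.1 hp), dig']
  · intro p _ hp
    rw [phiTerm, if_pos (Finsupp.notMem_support_iff.1 hp)]

lemma dig_le_dig'_add_one (hB : 2 ≤ B) (k : ℕ) : dig B k ≤ dig' B k + 1 := by
  unfold dig'
  split_ifs with h
  · simp [h, dig_one hB]
  · omega

lemma dig'_add_le (hB : 2 ≤ B) {p a b : ℕ} (hp : 2 ≤ p) (ha : a ≠ 0) (hb : b ≠ 0) :
    dig' B (a + b) ≤ dig B p + dig' B a + dig' B b := by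
  rw [dig', if_neg (by omega)]
  by_cases hab : a = 1 ∧ b = 1
  · obtain ⟨rfl, rfl⟩ := hab
    simpa [dig'] using dig_mono B hp
  have hp₁ := dig_pos hB (show p ≠ 0 by omega)
  have hsum := dig_add_le hB a b
  have ha' := dig_le_dig'_add_one hB a
  have hb' := dig_le_dig'_add_one hB b
  rcases not_and_or.1 hab with h | h
  · have : dig' B a = dig B a := if_neg h
    omega
  · have : dig' B b = dig B b := if_neg h
    omega

lemma phiTerm_add_le (hB : 2 ≤ B) {p : ℕ} (hp : 2 ≤ p) (a b : ℕ) :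
    phiTerm B p (a + b) ≤ phiTerm B p a + phiTerm B p b := by
  rcases eq_or_ne a 0 with rfl | ha
  · simp [phiTerm]
  rcases eq_or_ne b 0 with rfl | hb
  · simp [phiTerm]
  have hab : a + b ≠ 0 := by omega
  simp only [phiTerm, if_neg ha, if_neg hb, if_neg hab]
  have := dig'_add_le hB hp ha hb
  omega

lemma phi_mul_le (hB : 2 ≤ B) {x y : ℕ} (hx : x ≠ 0) (hy : y ≠ 0) :
    phi B (x * y) ≤ phi B x + phi B y := by
  have hxy : x * y ≠ 0 := mul_ne_zero hx hy
  rw [phi_eq_sum_phiTerm (subset_refl _),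
    phi_eq_sum_phiTerm (Nat.primeFactors_mono (dvd_mul_right x y) hxy),
    phi_eq_sum_phiTerm (Nat.primeFactors_mono (dvd_mul_left y x) hxy),
    ← Finset.sum_add_distrib]
  refine Finset.sum_le_sum fun p hp => ?_
  rw [Nat.factorization_mul hx hy, Finsupp.add_apply]
  exact phiTerm_add_le hB (Nat.prime_of_mem_primeFactors hp).two_le _ _

lemma hEcon_add_le_hEcon_mul_add_one (hB : 2 ≤ B) {x y : ℕ} (hx : x ≠ 0) (hy : y ≠ 0) :
    hEcon B x + hEcon B y ≤ hEcon B (x * y) + 1 := by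
  have hdig := dig_add_dig_le_dig_mul_add_one hB hx hy
  have hphi := phi_mul_le hB hx hy
  unfold hEcon
  omega

end Economical

theorem statement_9 (B : ℕ) (hB : 2 ≤ B) (m n : ℕ) (hm : 0 < m) (hn : 0 < n)
    (hfrugal : 0 < hEcon B m) :
    hEcon B n ≤ hEcon B (m * n) := by
  have := Economical.hEcon_add_le_hEcon_mul_add_one hB hm.ne' hn.ne'
  omega
end

section
/- Let r and s be coprime positive integers and let k ≥ 0. Then there are infinitely many positive integers n such that h(n) ≥ k, n is coprime to s, and for every prime p dividing r the exact power of p dividing n equals the exact power of p dividing r (i.e. n.factorization p = r.factorization p for all primes p ∣ r). -/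
section Digits

variable {B : ℕ}

theorem dig_le_self (hB : 2 ≤ B) (n : ℕ) : dig B n ≤ n :=
  (Nat.digits_length_le_iff hB n).mpr (Nat.lt_pow_self hB)

theorem lt_dig_of_pow_le (hB : 2 ≤ B) {k n : ℕ} (h : B ^ k ≤ n) : k < dig B n :=
  (Nat.lt_digits_length_iff hB n).mpr h

end Digits

section Phi

variable (B : ℕ)

theorem phi_mul_of_coprime {a b : ℕ} (ha : a ≠ 0) (hb : b ≠ 0) (hab : Nat.Coprime a b) :
    phi B (a * b) = phi B a + phi B b := by
  simp only [phi, Nat.support_factorization, Nat.primeFactors_mul ha hb,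
    Finset.sum_union hab.disjoint_primeFactors, Nat.factorization_mul_apply_of_coprime hab]
  congr 1 <;> refine Finset.sum_congr rfl fun q hq => ?_
  · have : q ∉ b.factorization.support := by
      rw [Nat.support_factorization]; exact Finset.disjoint_left.mp hab.disjoint_primeFactors hq
    rw [Finsupp.notMem_support_iff.mp this, add_zero]
  · have : q ∉ a.factorization.support := by
      rw [Nat.support_factorization]; exact Finset.disjoint_right.mp hab.disjoint_primeFactors hq
    rw [Finsupp.notMem_support_iff.mp this, zero_add]

theorem phi_prime_pow {p m : ℕ} (hp : p.Prime) (hm : m ≠ 0) :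
    phi B (p ^ m) = dig B p + if m = 1 then 0 else dig B m := by
  rw [phi, hp.factorization_pow, Finsupp.support_single p hm, Finset.sum_singleton,
    Finsupp.single_eq_same]

theorem phi_prime_pow_le {p m : ℕ} (hB : 2 ≤ B) (hp : p.Prime) (hm : m ≠ 0) :
    phi B (p ^ m) ≤ dig B p + m := by
  rw [phi_prime_pow B hp hm]
  have := dig_le_self hB m
  split <;> omega

end Phi

theorem hEcon_mul_prime_pow_ge {B r p m : ℕ} (hB : 2 ≤ B) (hr : r ≠ 0) (hp : p.Prime)
    (hpB : B ^ 2 ≤ p) (hpr : ¬ p ∣ r) (hm : m ≠ 0) :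
    (m : ℤ) + 1 - (phi B r + dig B p) ≤ hEcon B (r * p ^ m) := by
  have hcop : Nat.Coprime r (p ^ m) :=
    ((hp.coprime_iff_not_dvd.mpr hpr).pow_left m).symm
  have hdig : 2 * m < dig B (r * p ^ m) := by
    refine lt_dig_of_pow_le hB ?_
    calc B ^ (2 * m) = (B ^ 2) ^ m := pow_mul B 2 m
      _ ≤ p ^ m := Nat.pow_le_pow_left hpB m
      _ ≤ r * p ^ m := Nat.le_mul_of_pos_left _ (Nat.pos_of_ne_zero hr)
  have hphi : phi B (r * p ^ m) ≤ phi B r + (dig B p + m) := by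
    rw [phi_mul_of_coprime B hr (pow_ne_zero m hp.ne_zero) hcop]
    exact Nat.add_le_add_left (phi_prime_pow_le B hB hp hm) _
  rw [hEcon]
  omega

theorem statement_10 (B : ℕ) (hB : 2 ≤ B) (r s : ℕ) (hr : 0 < r) (hs : 0 < s)
    (hrs : Nat.Coprime r s) (k : ℕ) :
    {n : ℕ | 0 < n ∧ (k : ℤ) ≤ hEcon B n ∧ Nat.Coprime n s ∧
      ∀ p : ℕ, p.Prime → p ∣ r → n.factorization p = r.factorization p}.Infinite := by
  obtain ⟨p, hp_ge, hp⟩ := Nat.exists_infinite_primes (B ^ 2 + r + s + 1)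
  have hpr : ¬ p ∣ r := fun h => by have := Nat.le_of_dvd hr h; omega
  have hps : ¬ p ∣ s := fun h => by have := Nat.le_of_dvd hs h; omega
  set N := k + phi B r + dig B p + 1
  have hinj : Function.Injective fun m => r * p ^ (m + N) :=
    fun m m' h => by
      simpa using Nat.pow_right_injective hp.two_le (Nat.eq_of_mul_eq_mul_left hr h)
  refine Set.infinite_of_injective_forall_mem hinj fun m => ⟨?_, ?_, ?_, ?_⟩
  · exact Nat.mul_pos hr (pow_pos hp.pos _)
  · have := hEcon_mul_prime_pow_ge hB hr.ne' hp (by omega) hpr (m := m + N) (by omega)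
    push_cast at this
    omega
  · exact hrs.mul_left ((hp.coprime_iff_not_dvd.mpr hps).pow_left _)
  · intro q _ hqr
    have hqp : q ≠ p := by rintro rfl; exact hpr hqr
    rw [Nat.factorization_mul_apply_of_coprime ((hp.coprime_iff_not_dvd.mpr hpr).pow_left _).symm,
      hp.factorization_pow, Finsupp.single_eq_of_ne hqp, add_zero]
end

section
/- For every integer k > 0, there are infinitely many positive integers n with h(n) ≤ −k. -/
/-!
For a product `n` of distinct primes `p ∈ S`, `φ(n) = ∑ δ(p)` and `p < B ^ δ(p)`, so
`B ^ φ(n) ≥ ∏ (p + 1) = n · ∏ (1 + 1/p)`. Since `∑ 1/p` diverges, so does `∏ (1 + 1/p)`; once it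
exceeds `B ^ K` we get `n · B ^ K < B ^ φ(n)`, i.e. `δ(n) + K ≤ φ(n)`. Multiplying `n` by any
further prime keeps this inequality, which gives infinitely many such `n`.
-/

lemma one_add_sum_le_prod_one_add {ι R : Type*} [CommSemiring R] [PartialOrder R]
    [IsOrderedRing R] (s : Finset ι) {f : ι → R} (hf : ∀ i ∈ s, 0 ≤ f i) :
    1 + ∑ i ∈ s, f i ≤ ∏ i ∈ s, (1 + f i) := by
  induction s using Finset.cons_induction with
  | empty => simp
  | cons a s _ ih =>
    rw [Finset.sum_cons, Finset.prod_cons]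
    have hfa : 0 ≤ f a := hf a (Finset.mem_cons_self a s)
    have hfs : ∀ i ∈ s, 0 ≤ f i := fun i hi => hf i (Finset.mem_cons_of_mem hi)
    calc 1 + (f a + ∑ i ∈ s, f i)
        ≤ 1 + (f a + ∑ i ∈ s, f i) + f a * ∑ i ∈ s, f i :=
          le_add_of_nonneg_right (mul_nonneg hfa (Finset.sum_nonneg hfs))
      _ = (1 + f a) * (1 + ∑ i ∈ s, f i) := by ring
      _ ≤ (1 + f a) * ∏ i ∈ s, (1 + f i) :=
          mul_le_mul_of_nonneg_left (ih hfs) (add_nonneg zero_le_one hfa)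

lemma exists_primes_mul_prod_lt_prod_add_one (c : ℕ) :
    ∃ S : Finset ℕ, (∀ p ∈ S, p.Prime) ∧ c * ∏ p ∈ S, p < ∏ p ∈ S, (p + 1) := by
  have hdiv := (not_summable_iff_tendsto_nat_atTop_of_nonneg
    (Set.indicator_nonneg fun n _ => by positivity)).mp not_summable_one_div_on_primes
  obtain ⟨m, hm⟩ := (hdiv.eventually (Filter.eventually_gt_atTop (c : ℝ))).exists
  set S := (Finset.range m).filter Nat.Prime
  refine ⟨S, fun p hp => (Finset.mem_filter.mp hp).2, ?_⟩
  have hc : (c : ℝ) < ∏ p ∈ S, (1 + 1 / (p : ℝ)) :=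
    calc (c : ℝ) < ∑ p ∈ S, 1 / (p : ℝ) := by
          rwa [Finset.sum_indicator_eq_sum_filter] at hm
      _ ≤ 1 + ∑ p ∈ S, 1 / (p : ℝ) := by linarith
      _ ≤ ∏ p ∈ S, (1 + 1 / (p : ℝ)) :=
          one_add_sum_le_prod_one_add S fun p _ => by positivity
  have hpos : (0 : ℝ) < ∏ p ∈ S, (p : ℝ) :=
    Finset.prod_pos fun p hp => by exact_mod_cast (Finset.mem_filter.mp hp).2.pos
  have hsucc : ∏ p ∈ S, ((p : ℝ) + 1) = (∏ p ∈ S, (p : ℝ)) * ∏ p ∈ S, (1 + 1 / (p : ℝ)) := by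
    rw [← Finset.prod_mul_distrib]
    refine Finset.prod_congr rfl fun p hp => ?_
    have : (p : ℝ) ≠ 0 := by exact_mod_cast (Finset.mem_filter.mp hp).2.ne_zero
    field_simp
  rw [← Nat.cast_lt (α := ℝ)]
  push_cast
  rw [hsucc, mul_comm]
  exact mul_lt_mul_of_pos_left hc hpos

lemma phi_prod_primes (B : ℕ) {S : Finset ℕ} (hS : ∀ p ∈ S, p.Prime) :
    phi B (∏ p ∈ S, p) = ∑ p ∈ S, dig B p := by
  have hfac : ∀ q ∈ S, (∏ p ∈ S, p).factorization q = 1 := by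
    intro q hq
    rw [Nat.factorization_prod fun p hp => (hS p hp).ne_zero, Finsupp.finsetSum_apply,
      Finset.sum_congr rfl fun p hp => by rw [(hS p hp).factorization, Finsupp.single_apply],
      Finset.sum_ite_eq', if_pos hq]
  rw [phi, Nat.support_factorization, Nat.primeFactors_prod hS]
  exact Finset.sum_congr rfl fun p hp => by rw [hfac p hp, if_pos rfl, add_zero]

section

variable {B : ℕ} (hB : 2 ≤ B)
include hB

lemma dig_add_le_of_pow_mul_lt {n K m : ℕ} (hn : 0 < n) (h : B ^ K * n < B ^ m) :
    dig B n + K ≤ m := by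
  have := (Nat.digits_length_le_iff hB _).mpr h
  rwa [Nat.digits_base_pow_mul hB hn, List.length_append, List.length_replicate, add_comm] at this

lemma hEcon_prod_primes_le {K : ℕ} {S : Finset ℕ} (hS : ∀ p ∈ S, p.Prime)
    (h : B ^ K * ∏ p ∈ S, p < ∏ p ∈ S, (p + 1)) : hEcon B (∏ p ∈ S, p) ≤ -K := by
  have hlt : B ^ K * ∏ p ∈ S, p < B ^ phi B (∏ p ∈ S, p) := by
    rw [phi_prod_primes B hS, ← Finset.prod_pow_eq_pow_sum]
    exact h.trans_le (Finset.prod_le_prod' fun p _ => Nat.lt_base_pow_length_digits hB)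
  have := dig_add_le_of_pow_mul_lt hB (Finset.prod_pos fun p hp => (hS p hp).pos) hlt
  rw [hEcon]
  omega

end

theorem statement_13_general (B : ℕ) (hB : 2 ≤ B) (k : ℤ) :
    {n : ℕ | 0 < n ∧ hEcon B n ≤ -k}.Infinite := by
  obtain ⟨S, hS, hSlt⟩ := exists_primes_mul_prod_lt_prod_add_one (B ^ k.toNat)
  have hS0 : 0 < ∏ p ∈ S, p := Finset.prod_pos fun p hp => (hS p hp).pos
  refine ((Nat.infinite_setOfPred_prime.sdiff S.finite_toSet).image
    (mul_left_injective₀ hS0.ne').injOn).mono ?_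
  rintro _ ⟨q, ⟨hq : q.Prime, hqS⟩, rfl⟩
  have hT : ∀ p ∈ insert q S, p.Prime := (Finset.forall_mem_insert _ _ _).mpr ⟨hq, hS⟩
  have hTlt : B ^ k.toNat * ∏ p ∈ insert q S, p < ∏ p ∈ insert q S, (p + 1) := by
    rw [Finset.prod_insert hqS, Finset.prod_insert hqS]
    calc B ^ k.toNat * (q * ∏ p ∈ S, p) = q * (B ^ k.toNat * ∏ p ∈ S, p) := by ring
      _ < q * ∏ p ∈ S, (p + 1) := Nat.mul_lt_mul_of_pos_left hSlt hq.pos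
      _ ≤ (q + 1) * ∏ p ∈ S, (p + 1) := Nat.mul_le_mul_right _ q.le_succ
  have hle := hEcon_prod_primes_le hB hT hTlt
  rw [Finset.prod_insert hqS] at hle
  exact ⟨Nat.mul_pos hq.pos hS0, hle.trans (neg_le_neg (Int.self_le_toNat k))⟩

theorem statement_13 (B : ℕ) (hB : 2 ≤ B) (k : ℤ) (hk : 0 < k) :
    {n : ℕ | 0 < n ∧ hEcon B n ≤ -k}.Infinite :=
  statement_13_general B hB k
end
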